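/- Admissibility of copy-inversion in SLJF: if Γ, (a;Φ;σ'):N; pos(N{v⃗'/v⃗}), Δ ⊢ neg(K); σ, σ'{v⃗'/v⃗} with a derivation of height at most n whose first application of a focus rule is focusL applied to pos(N{v⃗'/v⃗}), then Γ, (a;Φ;σ'):N; Δ ⊢ neg(K); σ. -/

import Mathlib

set_option autoImplicit true

/-- Variables of SLJF: existential variables `x`, Eigen-variables `u`,
and special variables — either a paired left/right special variable
`a_L`/`a_R` (introduced by skolemising `⊗` on the right and `⊸` on the
left) or an unpaired special variable `a` (introduced at `!`). -/
inductive Var : Type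
  | exv : ℕ → Var
  | eig : ℕ → Var
  | spL : ℕ → Var
  | spR : ℕ → Var
  | sp  : ℕ → Var
deriving DecidableEq

def Var.isEx : Var → Bool | .exv _ => true | _ => false
def Var.isEig : Var → Bool | .eig _ => true | _ => false
def Var.isSpecial : Var → Bool
  | .spL _ => true | .spR _ => true | .sp _ => true | _ => false

/-- The partner of a paired special variable: `a_L ↦ a_R` and `a_R ↦ a_L`. -/
def Var.pair? : Var → Option Var
  | .spL n => some (.spR n) | .spR n => some (.spL n) | _ => none

/-- Terms: variables, function symbols applied to a term, Skolem terms
`u(t)` (an Eigen-variable used as a function), pairing and unit (used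
to encode tuples `(t, …, t)`). -/
inductive Tm : Type
  | var : Var → Tm
  | fn : ℕ → Tm → Tm
  | app : Var → Tm → Tm
  | pair : Tm → Tm → Tm
  | unit : Tm
deriving DecidableEq

/-- `t.occurs v`: the variable `v` occurs in the term `t`. -/
def Tm.occurs (v : Var) : Tm → Prop
  | .var w => w = v
  | .fn _ t => t.occurs v
  | .app u t => u = v ∨ t.occurs v
  | .pair s t => s.occurs v ∨ t.occurs v
  | .unit => False

def Tm.fv : Tm → List Var
  | .var w => [w]
  | .fn _ t => t.fv
  | .app u t => u :: t.fv
  | .pair s t => s.fv ++ t.fv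
  | .unit => []

/-- Parallel substitutions `σ ::= · | σ, t/x | σ, u(t)/u | σ, t/a`,
represented as association lists of bindings. -/
abbrev Subst := List (Var × Tm)

def Subst.get (σ : Subst) (v : Var) : Option Tm :=
  (σ.find? fun p => p.1 = v).map Prod.snd

/-- Application of a substitution to a term. -/
def Tm.subst (σ : Subst) : Tm → Tm
  | .var w => (Subst.get σ w).getD (.var w)
  | .fn f t => .fn f (t.subst σ)
  | .app u t => .app u (t.subst σ)
  | .pair s t => .pair (s.subst σ) (t.subst σ)
  | .unit => .unit

def Tm.rename (ρ : Var → Var) : Tm → Tm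
  | .var w => .var (ρ w)
  | .fn f t => .fn f (t.rename ρ)
  | .app u t => .app (ρ u) (t.rename ρ)
  | .pair s t => .pair (s.rename ρ) (t.rename ρ)
  | .unit => .unit

def Subst.rename (ρ : Var → Var) (σ : Subst) : Subst :=
  σ.map fun p => (ρ p.1, p.2.rename ρ)

/-- `σ ↾ Φ`: restriction of `σ` to the bindings of variables in `Φ`. -/
def Subst.restrict (σ : Subst) (Φ : List Var) : Subst :=
  σ.filter fun p => p.1 ∈ Φ

/-- `σ \ Φ`: restriction of `σ` to the bindings of variables not in `Φ`. -/
def Subst.minus (σ : Subst) (Φ : List Var) : Subst :=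
  σ.filter fun p => p.1 ∉ Φ

/-- Admissibility (Definition 2): `σ` is admissible for `Φ` iff
(1) no existential or special variable `v` (bound by `σ`) occurs in
`vσⁿ` for any `n ≥ 1`, and (2) whenever `xσⁿ` contains a paired special
variable `a_L` (resp. `a_R`) for some `x` bound by `σ`, the partner
variable `a_R` (resp. `a_L`) does not occur in `Φ`. -/
def admissible (σ : Subst) (Φ : List Var) : Prop :=
  (∀ v ∈ σ.map Prod.fst, (v.isEx || v.isSpecial) = true →
      ∀ n, 1 ≤ n → ¬ Tm.occurs v ((Tm.subst σ)^[n] (Tm.var v))) ∧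
  (∀ v ∈ σ.map Prod.fst, ∀ n : ℕ, ∀ a a' : Var, Var.pair? a = some a' →
      Tm.occurs a ((Tm.subst σ)^[n] (Tm.var v)) → a' ∉ Φ)

/-- `Aσ = Bσ` at the axioms: equality of the two terms after
(sufficiently many iterations of) applying `σ`. -/
def substEq (σ : Subst) (t s : Tm) : Prop :=
  ∃ k, (Tm.subst σ)^[k] t = (Tm.subst σ)^[k] s

mutual
/-- Negative formulas of SLJF: atoms `A⁻` indexed by a variable context
`Φ`, linear implication and up-shift. -/
inductive NF : Type
  | natom : ℕ → Tm → List Var → NF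
  | lolli : PF → NF → NF
  | up : PF → NF
/-- Positive formulas of SLJF: atoms `A⁺` indexed by `Φ`, tensor, the
annotated exponential `!_(a;Φ;σ)` and down-shift. -/
inductive PF : Type
  | patom : ℕ → Tm → List Var → PF
  | tensor : PF → PF → PF
  | bang : Var → List Var → Subst → NF → PF
  | down : NF → PF
end

mutual
def NF.rename (ρ : Var → Var) : NF → NF
  | .natom p t Φ => .natom p (t.rename ρ) (Φ.map ρ)
  | .lolli P N => .lolli (P.rename ρ) (N.rename ρ)
  | .up P => .up (P.rename ρ)
def PF.rename (ρ : Var → Var) : PF → PF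
  | .patom p t Φ => .patom p (t.rename ρ) (Φ.map ρ)
  | .tensor P Q => .tensor (P.rename ρ) (Q.rename ρ)
  | .bang a Φ σ N => .bang (ρ a) (Φ.map ρ) (Subst.rename ρ σ) (N.rename ρ)
  | .down N => .down (N.rename ρ)
end

mutual
/-- Free variables of an SLJF formula (Definition 1). -/
def NF.fv : NF → List Var
  | .natom _ _ Φ => Φ
  | .lolli P N => P.fv ++ N.fv
  | .up P => P.fv
def PF.fv : PF → List Var
  | .patom _ _ Φ => Φ
  | .tensor P Q => P.fv ++ Q.fv
  | .bang _ Φ _ _ => Φ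
  | .down N => N.fv
end

mutual
/-- The variable contexts `Φ` of all atoms (axioms) of a formula. -/
def NF.atomCtxs : NF → List (List Var)
  | .natom _ _ Φ => [Φ]
  | .lolli P N => P.atomCtxs ++ N.atomCtxs
  | .up P => P.atomCtxs
def PF.atomCtxs : PF → List (List Var)
  | .patom _ _ Φ => [Φ]
  | .tensor P Q => P.atomCtxs ++ Q.atomCtxs
  | .bang _ _ _ N => N.atomCtxs
  | .down N => N.atomCtxs
end

/-- Polarity-agnostic skolemised formulas `K`. -/
abbrev KF := NF ⊕ PF

/-- Polarity adjustment `pos(·)` (Figure 4). -/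
def KF.pos : KF → PF
  | .inl (.up P) => P
  | .inl N => .down N
  | .inr P => P

/-- Polarity adjustment `neg(·)` (Figure 4). -/
def KF.neg : KF → NF
  | .inl N => N
  | .inr (.down N) => N
  | .inr P => .up P

def KF.fvK : KF → List Var
  | .inl N => N.fv
  | .inr P => P.fv

/-- A closure `(a; Φ; σ) : N` of the modal context. -/
structure Closure : Type where
  name : Var
  ctx : List Var
  sub : Subst
  fm : NF

/-- The modal (unrestricted) context of SLJF. -/
abbrev MCtx := List Closure

/-- The tuple term `(v₁, …, vₙ)` of a variable context. -/
def listToTm (Φ : List Var) : Tm := Φ.foldr (fun v t => Tm.pair (.var v) t) .unit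

/-- The three judgment forms of SLJF. -/
inductive SFoc : Type
  | inv : NF → SFoc
  | left : NF → NF → SFoc
  | right : PF → SFoc

/-- Derivability in SLJF (Figure 3), indexed by a bound `n` on the
height of the derivation: `SDer Γ Δ J σ n`. -/
inductive SDer : MCtx → Multiset PF → SFoc → Subst → ℕ → Prop
  | axNeg : substEq σ t s → admissible σ (Φ₁ ++ Φ₂) →
      SDer Γ 0 (.left (.natom p t Φ₁) (.natom p s Φ₂)) σ (n+1)
  | axPos : substEq σ t s → admissible σ (Φ₁ ++ Φ₂) →
      SDer Γ {.patom p t Φ₁} (.right (.patom p s Φ₂)) σ (n+1)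
  | lolliL : SDer Γ Δ₁ (.right P) σ n → SDer Γ Δ₂ (.left N C) σ n →
      SDer Γ (Δ₁ + Δ₂) (.left (.lolli P N) C) σ (n+1)
  | tensorR : SDer Γ Δ₁ (.right P₁) σ n → SDer Γ Δ₂ (.right P₂) σ n →
      SDer Γ (Δ₁ + Δ₂) (.right (.tensor P₁ P₂)) σ (n+1)
  | lolliR : SDer Γ (P ::ₘ Δ) (.inv N) σ n → SDer Γ Δ (.inv (.lolli P N)) σ (n+1)
  | tensorL : SDer Γ (P₁ ::ₘ P₂ ::ₘ Δ) (.inv C) σ n →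
      SDer Γ (PF.tensor P₁ P₂ ::ₘ Δ) (.inv C) σ (n+1)
  | bangL : SDer (⟨a, Φ, σ', N⟩ :: Γ) Δ (.inv C) σ n →
      SDer Γ (PF.bang a Φ σ' N ::ₘ Δ) (.inv C) σ (n+1)
  | bangR : SDer Γ 0 (.inv N)
        (σ ++ σ' ++ [(a, listToTm (Γ.flatMap Closure.ctx))]
           ++ Γ.map (fun c => (c.name, listToTm Φ))) n →
      SDer Γ 0 (.right (.bang a Φ σ' N)) σ (n+1)
  | copy : ⟨a, Φ, σ', N⟩ ∈ Γ → (∀ v ∈ Φ, ρ v = v) →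
      SDer Γ Δ (.left (N.rename ρ) C) (σ ++ Subst.rename ρ σ') n →
      SDer Γ Δ (.inv C) σ (n+1)
  | focusL : SDer Γ Δ (.left N C) σ n → SDer Γ (PF.down N ::ₘ Δ) (.inv C) σ (n+1)
  | focusR : SDer Γ Δ (.right P) σ n → SDer Γ Δ (.inv (.up P)) σ (n+1)
  | blurL : SDer Γ (P ::ₘ Δ) (.inv C) σ n → SDer Γ Δ (.left (.up P) C) σ (n+1)
  | blurR : SDer Γ Δ (.inv N) σ n → SDer Γ Δ (.right (.down N)) σ (n+1)

/-- Derivability in SLJF (without the height bound). -/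
def SDeriv (Γ : MCtx) (Δ : Multiset PF) (F : SFoc) (σ : Subst) : Prop :=
  ∃ n, SDer Γ Δ F σ n

/-- `FFR Γ Δ N σ n`: there is an SLJF derivation of `Γ; Δ ⊢ N; σ` of
height at most `n` whose first application of a focus rule is `focusR`
(possibly preceded by the invertible rules `⊗L`, `!L`, `⊸R`). -/
inductive FFR : MCtx → Multiset PF → NF → Subst → ℕ → Prop
  | tensorL : FFR Γ (P₁ ::ₘ P₂ ::ₘ Δ) C σ n →
      FFR Γ (PF.tensor P₁ P₂ ::ₘ Δ) C σ (n+1)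
  | bangL : FFR (⟨a, Φ, σ', N⟩ :: Γ) Δ C σ n →
      FFR Γ (PF.bang a Φ σ' N ::ₘ Δ) C σ (n+1)
  | lolliR : FFR Γ (P ::ₘ Δ) N σ n → FFR Γ Δ (.lolli P N) σ (n+1)
  | focusR : SDer Γ Δ (.right P) σ n → FFR Γ Δ (.up P) σ (n+1)

/-- `FFL Γ Δ C σ n`: there is an SLJF derivation of `Γ; Δ ⊢ C; σ` of
height at most `n` whose first application of a focus rule is `focusL`. -/
inductive FFL : MCtx → Multiset PF → NF → Subst → ℕ → Prop
  | tensorL : FFL Γ (P₁ ::ₘ P₂ ::ₘ Δ) C σ n →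
      FFL Γ (PF.tensor P₁ P₂ ::ₘ Δ) C σ (n+1)
  | bangL : FFL (⟨a, Φ, σ', N⟩ :: Γ) Δ C σ n →
      FFL Γ (PF.bang a Φ σ' N ::ₘ Δ) C σ (n+1)
  | lolliR : FFL Γ (P ::ₘ Δ) N σ n → FFL Γ Δ (.lolli P N) σ (n+1)
  | focusL : SDer Γ Δ (.left N₀ C) σ n → FFL Γ (PF.down N₀ ::ₘ Δ) C σ (n+1)

/-- `FFLon N₀ Γ Δ C σ n`: as `FFL`, but the first focus rule is
`focusL` applied specifically to the formula `↓N₀`. -/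
inductive FFLon (N₀ : NF) : MCtx → Multiset PF → NF → Subst → ℕ → Prop
  | tensorL : FFLon N₀ Γ (P₁ ::ₘ P₂ ::ₘ Δ) C σ n →
      FFLon N₀ Γ (PF.tensor P₁ P₂ ::ₘ Δ) C σ (n+1)
  | bangL : FFLon N₀ (⟨a, Φ, σ', N⟩ :: Γ) Δ C σ n →
      FFLon N₀ Γ (PF.bang a Φ σ' N ::ₘ Δ) C σ (n+1)
  | lolliR : FFLon N₀ Γ (P ::ₘ Δ) N σ n → FFLon N₀ Γ Δ (.lolli P N) σ (n+1)
  | focusL : SDer Γ Δ (.left N₀ C) σ n → FFLon N₀ Γ (PF.down N₀ ::ₘ Δ) C σ (n+1)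

/-- `Φ ⊢ t`: all variables of `t` are declared in `Φ`. -/
def TmOk (Φ : List Var) (t : Tm) : Prop := ∀ v ∈ t.fv, v ∈ Φ

/-- Typing of parallel substitutions `σ : Φ → Φ'` (Figure 2). -/
inductive SubTy : Subst → List Var → List Var → Prop
  | nil : SubTy [] Φ []
  | exv : TmOk Φ t → SubTy σ Φ Φ' →
      SubTy ((Var.exv m, t) :: σ) Φ (Var.exv m :: Φ')
  | eig : TmOk Φ t → SubTy σ Φ Φ' →
      SubTy ((Var.eig m, Tm.app (Var.eig m) t) :: σ) Φ (Var.eig m :: Φ')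
  | spL : TmOk Φ t → SubTy σ Φ Φ' →
      SubTy ((Var.spL m, t) :: σ) Φ (Var.spL m :: Φ')
  | spR : TmOk Φ t → SubTy σ Φ Φ' →
      SubTy ((Var.spR m, t) :: σ) Φ (Var.spR m :: Φ')
  | sp : TmOk Φ t → SubTy σ Φ Φ' →
      SubTy ((Var.sp m, t) :: σ) Φ (Var.sp m :: Φ')

theorem FFLon.toSDer {N₀ : NF} {Γ : MCtx} {Δ : Multiset PF} {C : NF} {σ : Subst} {n : ℕ}
    (h : FFLon N₀ Γ Δ C σ n) : SDer Γ Δ (.inv C) σ n := by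
  induction h with
  | tensorL _ ih => exact .tensorL ih
  | bangL _ ih => exact .bangL ih
  | lolliR _ ih => exact .lolliR ih
  | focusL h => exact .focusL h

/-- The invertible rules preceding the focus step never touch `↓N{ρ}`, so they can be
replayed without it, and the final `focusL` step is replaced by `copy`. -/
theorem FFLon.copy_inv {a : Var} {Φ : List Var} {σ' σ : Subst} {N : NF} {ρ : Var → Var}
    (hρ : ∀ v ∈ Φ, ρ v = v) {Γ : MCtx} {Δ : Multiset PF} {C : NF} {n : ℕ}
    (hmem : ⟨a, Φ, σ', N⟩ ∈ Γ)
    (h : FFLon (N.rename ρ) Γ (.down (N.rename ρ) ::ₘ Δ) C (σ ++ Subst.rename ρ σ') n) :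
    SDer Γ Δ (.inv C) σ n := by
  generalize hΔ₀ : PF.down (N.rename ρ) ::ₘ Δ = Δ₀ at h
  generalize hτ : σ ++ Subst.rename ρ σ' = τ at h
  induction h generalizing Δ with subst hτ
  | @tensorL _ P₁ P₂ _ _ _ _ _ ih =>
    obtain ⟨⟨⟩, -⟩ | ⟨-, Δ', rfl, rfl⟩ := Multiset.cons_eq_cons.mp hΔ₀
    exact .tensorL (ih hmem (Δ := P₁ ::ₘ P₂ ::ₘ Δ') (by simp only [Multiset.cons_swap]) rfl)
  | bangL _ ih =>
    obtain ⟨⟨⟩, -⟩ | ⟨-, Δ', rfl, rfl⟩ := Multiset.cons_eq_cons.mp hΔ₀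
    exact .bangL (ih (List.mem_cons_of_mem _ hmem) rfl rfl)
  | @lolliR _ P _ _ _ _ _ ih =>
    subst hΔ₀
    exact .lolliR (ih hmem (Δ := P ::ₘ Δ) (Multiset.cons_swap _ _ _) rfl)
  | focusL h =>
    obtain rfl := (Multiset.cons_inj_right _).mp hΔ₀
    exact .copy hmem hρ h

/-- Admissibility of copy-inversion in SLJF: if
`Γ, (a;Φ;σ'):N; pos(N{v⃗'/v⃗}), Δ ⊢ neg(K); σ, σ'{v⃗'/v⃗}` with a
derivation of height at most `n` whose first application of a focus
rule is `focusL` applied to `pos(N{v⃗'/v⃗})` (where the renaming `ρ` is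
the identity on `Φ`, so it only renames `v⃗ = FV(N)\Φ`), then
`Γ, (a;Φ;σ'):N; Δ ⊢ neg(K); σ`. -/
theorem stmt9 (n : ℕ) (Γ : MCtx) (Δ : Multiset PF) (a : Var) (Φ : List Var)
    (σ' σ : Subst) (N : NF) (K : KF) (ρ : Var → Var)
    (hρ : ∀ v ∈ Φ, ρ v = v)
    (h : FFLon (N.rename ρ) (⟨a, Φ, σ', N⟩ :: Γ)
        (KF.pos (Sum.inl (N.rename ρ)) ::ₘ Δ) (KF.neg K)
        (σ ++ Subst.rename ρ σ') n) :
    SDeriv (⟨a, Φ, σ', N⟩ :: Γ) Δ (.inv (KF.neg K)) σ := by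
  cases N with
  | up P =>
    -- `pos(↑P) = P`, so the renamed copy of `↑P` is recovered by `blurL` before `copy`.
    have hP : SDer _ (P.rename ρ ::ₘ Δ) (.inv (KF.neg K)) _ n := h.toSDer
    exact ⟨n + 2, .copy List.mem_cons_self hρ (.blurL hP)⟩
  | natom | lolli => exact ⟨n, h.copy_inv hρ List.mem_cons_self⟩
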